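/- Let A = (a_{ij}) be an n×n real matrix such that D(A) belongs to the class 𝒟, D(A) is strongly connected, and Δ_A ≠ 0. Let B = (b_{ij}) be the n×n matrix with entries b_{ij} = μ_{ij}/Δ_A. Then AB = BA; equivalently, Σ_{k=1}^n a_{ik} μ_{kj} = Σ_{l=1}^n μ_{il} a_{lj} for all i, j ∈ {1,…,n}. -/

import Mathlib

open Matrix

/-- Adjacency in a digraph given by relation `G`: a 2-cycle between distinct `i` and `j`. -/
def Adjd {n : ℕ} (G : Fin n → Fin n → Prop) (i j : Fin n) : Prop :=
  i ≠ j ∧ G i j ∧ G j i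

/-- `G` is a simple symmetric digraph: no loops and edges come in both directions. -/
def IsSSD {n : ℕ} (G : Fin n → Fin n → Prop) : Prop :=
  (∀ i, ¬ G i i) ∧ ∀ i j, G i j → G j i

/-- A vertex is pendant if it is incident to exactly one 2-cycle. -/
def Pendant {n : ℕ} (G : Fin n → Fin n → Prop) (i : Fin n) : Prop :=
  ∃! j, Adjd G i j

/-- The class 𝒟: simple symmetric digraphs in which every non-pendant vertex is
adjacent to at least one pendant vertex. -/
def InClassD {n : ℕ} (G : Fin n → Fin n → Prop) : Prop :=
  IsSSD G ∧ ∀ i, ¬ Pendant G i → ∃ j, Adjd G i j ∧ Pendant G j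

/-- Strong connectivity: a directed path from every vertex to every other vertex. -/
def StronglyConnected {n : ℕ} (G : Fin n → Fin n → Prop) : Prop :=
  ∀ i j : Fin n, Relation.ReflTransGen G i j

/-- An unordered pair `e` is a 2-cycle of `G`. -/
def IsEdge {n : ℕ} (G : Fin n → Fin n → Prop) (e : Sym2 (Fin n)) : Prop :=
  ∃ i j, e = s(i, j) ∧ Adjd G i j

/-- A matching: a set of pairwise vertex-disjoint 2-cycles. -/
def IsMatching {n : ℕ} (G : Fin n → Fin n → Prop) (M : Finset (Sym2 (Fin n))) : Prop :=
  (∀ e ∈ M, IsEdge G e) ∧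
  ∀ e ∈ M, ∀ f ∈ M, e ≠ f → ∀ v : Fin n, v ∈ e → v ∉ f

/-- A maximum matching: a matching of maximum cardinality. -/
def IsMaxMatching {n : ℕ} (G : Fin n → Fin n → Prop) (M : Finset (Sym2 (Fin n))) : Prop :=
  IsMatching G M ∧ ∀ M', IsMatching G M' → M'.card ≤ M.card

/-- A cycle chain, recorded by its list of (distinct) vertices `i₁, …, i_{m+1}`. -/
def IsCycleChain {n : ℕ} (G : Fin n → Fin n → Prop) (c : List (Fin n)) : Prop :=
  c.Nodup ∧ 2 ≤ c.length ∧ c.Chain' (Adjd G)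

/-- A cycle chain from `i` to `j`. -/
def IsCycleChainBtw {n : ℕ} (G : Fin n → Fin n → Prop) (i j : Fin n) (c : List (Fin n)) : Prop :=
  IsCycleChain G c ∧ c.head? = some i ∧ c.getLast? = some j

/-- The list of 2-cycles of a cycle chain. -/
def chainEdges {n : ℕ} (c : List (Fin n)) : List (Sym2 (Fin n)) :=
  List.zipWith (fun a b => s(a, b)) c c.tail

/-- The cycle chain `c` is alternating with respect to `M`: its 2-cycles are alternately
in `M` and outside `M`, with the first and last 2-cycle in `M` (so its length is odd). -/
def IsAltChain {n : ℕ} (M : Finset (Sym2 (Fin n))) (c : List (Fin n)) : Prop :=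
  Odd (chainEdges c).length ∧
  ∀ k (h : k < (chainEdges c).length), ((chainEdges c).get ⟨k, h⟩ ∈ M ↔ Even k)

/-- The digraph of a square matrix: edge `(i,j)` iff `A i j ≠ 0`. -/
def DA {n : ℕ} (A : Matrix (Fin n) (Fin n) ℝ) : Fin n → Fin n → Prop :=
  fun i j => A i j ≠ 0

/-- The cycle product `a_{ij} a_{ji}` of a 2-cycle. -/
def cycProd {n : ℕ} (A : Matrix (Fin n) (Fin n) ℝ) (e : Sym2 (Fin n)) : ℝ :=
  Sym2.lift ⟨fun i j => A i j * A j i, fun i j => mul_comm _ _⟩ e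

/-- The matching product η(M) of a matching `M`. -/
noncomputable def matchProd {n : ℕ} (A : Matrix (Fin n) (Fin n) ℝ)
    (M : Finset (Sym2 (Fin n))) : ℝ :=
  ∏ e ∈ M, cycProd A e

/-- The (finite) collection of all maximum matchings of `D(A)`. -/
noncomputable def maxMatchings {n : ℕ} (A : Matrix (Fin n) (Fin n) ℝ) :
    Finset (Finset (Sym2 (Fin n))) :=
  {M | IsMaxMatching (DA A) M}.toFinite.toFinset

/-- Δ_A: the sum of the matching products over all maximum matchings of `D(A)`. -/
noncomputable def Delta {n : ℕ} (A : Matrix (Fin n) (Fin n) ℝ) : ℝ :=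
  ∑ M ∈ maxMatchings A, matchProd A M

/-- 𝕄(i,j): maximum matchings with respect to which some cycle chain from `i` to `j`
is an alternating cycle chain. -/
def MMset {n : ℕ} (A : Matrix (Fin n) (Fin n) ℝ) (i j : Fin n) :
    Set (Finset (Sym2 (Fin n))) :=
  {M | IsMaxMatching (DA A) M ∧ ∃ c, IsCycleChainBtw (DA A) i j c ∧ IsAltChain M c}

/-- `i` and `j` are maximally matchable: 𝕄(i,j) ≠ ∅. -/
def MaxMatchable {n : ℕ} (A : Matrix (Fin n) (Fin n) ℝ) (i j : Fin n) : Prop :=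
  (MMset A i j).Nonempty

open scoped Classical in
/-- The (unique) alternating cycle chain from `i` to `j`, when it exists. -/
noncomputable def theChain {n : ℕ} (A : Matrix (Fin n) (Fin n) ℝ) (i j : Fin n) :
    List (Fin n) :=
  if h : ∃ c, IsCycleChainBtw (DA A) i j c ∧ ∃ M ∈ MMset A i j, IsAltChain M c
  then h.choose else []

/-- The path product along a cycle chain: `a_{i₁ i₂} a_{i₂ i₃} ⋯ a_{i_m i_{m+1}}`. -/
def pathProd {n : ℕ} (A : Matrix (Fin n) (Fin n) ℝ) (c : List (Fin n)) : ℝ :=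
  (List.zipWith (fun a b => A a b) c c.tail).prod

open scoped Classical in
/-- β_{ij} = (−1)^{(m−1)/2} P_m(i,j) for maximally matchable `i, j`, and `0` otherwise. -/
noncomputable def beta {n : ℕ} (A : Matrix (Fin n) (Fin n) ℝ) (i j : Fin n) : ℝ :=
  if MaxMatchable A i j then
    (-1 : ℝ) ^ (((theChain A i j).length - 2) / 2) * pathProd A (theChain A i j)
  else 0

/-- β̄_{i,j}(M): product of the cycle products of the 2-cycles of `M` not contained in
the alternating cycle chain from `i` to `j`. -/
noncomputable def betaBar {n : ℕ} (A : Matrix (Fin n) (Fin n) ℝ) (i j : Fin n)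
    (M : Finset (Sym2 (Fin n))) : ℝ :=
  ∏ e ∈ M.filter (fun e => e ∉ chainEdges (theChain A i j)), cycProd A e

/-- μ_{ij} = β_{ij} · Σ_{M ∈ 𝕄(i,j)} β̄_{i,j}(M). -/
noncomputable def mu {n : ℕ} (A : Matrix (Fin n) (Fin n) ℝ) (i j : Fin n) : ℝ :=
  beta A i j * ∑ M ∈ (MMset A i j).toFinite.toFinset, betaBar A i j M

/-- `X` is a group inverse of `A`. -/
def IsGroupInverse {n : ℕ} (A X : Matrix (Fin n) (Fin n) ℝ) : Prop :=
  A * X * A = A ∧ X * A * X = X ∧ A * X = X * A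

/-- A tree digraph: strongly connected and all of its cycles have length 2. -/
def IsTreeDigraph {n : ℕ} (G : Fin n → Fin n → Prop) : Prop :=
  StronglyConnected G ∧
  ∀ (a : Fin n) (l : List (Fin n)), (a :: l).Nodup → List.Chain G a l →
    G ((a :: l).getLast (List.cons_ne_nil a l)) a → (a :: l).length = 2

/-- A star tree digraph: a tree digraph with a center adjacent to every other vertex,
every other vertex being adjacent only to the center. -/
def IsStarTree {n : ℕ} (G : Fin n → Fin n → Prop) : Prop :=
  IsTreeDigraph G ∧
  ∃ c : Fin n, (∀ j, j ≠ c → Adjd G c j) ∧ ∀ i j, Adjd G i j → i = c ∨ j = c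

/-- A corona digraph: a simple symmetric digraph in which each non-pendant vertex is
adjacent to exactly one pendant vertex. -/
def IsCorona {n : ℕ} (G : Fin n → Fin n → Prop) : Prop :=
  IsSSD G ∧ ∀ i, ¬ Pendant G i → ∃! j, Adjd G i j ∧ Pendant G j

/-- 𝕄(i): the maximum matchings in which vertex `i` is matched. -/
noncomputable def MMi {n : ℕ} (A : Matrix (Fin n) (Fin n) ℝ) (i : Fin n) :
    Finset (Finset (Sym2 (Fin n))) :=
  {M | IsMaxMatching (DA A) M ∧ ∃ e ∈ M, i ∈ e}.toFinite.toFinset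


/-!
For `n ≥ 3`, strong connectivity forbids a 2-cycle between two pendant vertices. Hence every
2-cycle of a maximum matching joins a core (non-pendant) vertex to one of its pendant neighbours,
and maximum matchings correspond to choices of one pendant neighbour for each core. The only
alternating cycle chains are then `(c, p)`, `(p, c)` and `(p, c, c', q)` with `p, q` pendant at
the adjacent cores `c, c'`, and summing over the free choices computes `μ` in closed form:
`μ_cp = a_cp W_c`, `μ_pc = a_pc W_c`, `μ_pq = -a_pc a_cc' a_c'q W_cc'`, and all other entries
vanish, where `W_S` is the product of `w_x = Σ_p a_xp a_px` over the cores `x ∉ S`. The identity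
`Σ_k a_ik μ_kj = Σ_l μ_il a_lj` is then checked entrywise; the only cancellation is
`W_c = w_i W_ic`. For `n = 2` the digraph is a single 2-cycle and `μ = A`.
-/

open Finset
open Fintype (piFinset mem_piFinset piFinset_nonempty)

section Graph

variable {n : ℕ} {G : Fin n → Fin n → Prop} {i j p x y : Fin n}

theorem Adjd.symm (h : Adjd G i j) : Adjd G j i := ⟨h.1.symm, h.2.2, h.2.1⟩

theorem IsEdge.adjd (h : IsEdge G s(x, y)) : Adjd G x y := by
  obtain ⟨i, j, hij, hadj⟩ := h
  rcases Sym2.eq_iff.mp hij with ⟨rfl, rfl⟩ | ⟨rfl, rfl⟩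
  exacts [hadj, hadj.symm]

theorem Pendant.eq_of_adjd (hp : Pendant G p) (hx : Adjd G p x) (hy : Adjd G p y) : x = y := by
  obtain ⟨z, -, hz⟩ := hp
  rw [hz x hx, hz y hy]

theorem Pendant.ne_of_not_pendant (hp : Pendant G p) (hx : ¬ Pendant G x) : p ≠ x :=
  fun h => hx (h ▸ hp)

theorem InClassD.exists_adjd (hD : InClassD G) (i : Fin n) : ∃ j, Adjd G i j := by
  by_cases hi : Pendant G i
  · exact hi.exists
  · obtain ⟨j, hj, -⟩ := hD.2 i hi
    exact ⟨j, hj⟩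

theorem IsCycleChainBtw.ne {c : List (Fin n)} (h : IsCycleChainBtw G i j c) : i ≠ j := by
  obtain ⟨⟨hnd, hlen, -⟩, hi, hj⟩ := h
  rintro rfl
  rw [List.head?_eq_getElem?, List.getElem?_eq_getElem (by omega)] at hi
  rw [List.getLast?_eq_getElem?, List.getElem?_eq_getElem (by omega)] at hj
  have := hnd.getElem_inj_iff.mp (Option.some_injective _ (hi.trans hj.symm))
  omega

open scoped Classical in
/-- The unique neighbour of a pendant vertex `p` (junk value `p` if `p` has no neighbour). -/
noncomputable def center (G : Fin n → Fin n → Prop) (p : Fin n) : Fin n :=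
  if h : ∃ c, Adjd G p c then h.choose else p

theorem Pendant.adjd_center (hp : Pendant G p) : Adjd G p (center G p) := by
  have h : ∃ c, Adjd G p c := hp.exists
  rw [center, dif_pos h]
  exact h.choose_spec

theorem Pendant.center_eq (hp : Pendant G p) (h : Adjd G p x) : center G p = x :=
  hp.eq_of_adjd hp.adjd_center h

open scoped Classical in
noncomputable def cores (G : Fin n → Fin n → Prop) : Finset (Fin n) := {c | ¬ Pendant G c}

open scoped Classical in
noncomputable def pendantNbrs (G : Fin n → Fin n → Prop) (c : Fin n) : Finset (Fin n) :=
  {p | Pendant G p ∧ Adjd G c p}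

@[simp] theorem mem_cores : x ∈ cores G ↔ ¬ Pendant G x := by simp [cores]

@[simp] theorem mem_pendantNbrs : p ∈ pendantNbrs G x ↔ Pendant G p ∧ Adjd G x p := by
  simp [pendantNbrs]

theorem Pendant.mem_pendantNbrs_center (hp : Pendant G p) : p ∈ pendantNbrs G (center G p) :=
  mem_pendantNbrs.mpr ⟨hp, hp.adjd_center.symm⟩

theorem center_eq_of_mem_pendantNbrs (hp : p ∈ pendantNbrs G x) : center G p = x :=
  (mem_pendantNbrs.mp hp).1.center_eq (mem_pendantNbrs.mp hp).2.symm

end Graph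

structure PendantCovered {n : ℕ} (G : Fin n → Fin n → Prop) : Prop where
  exists_pendant_adjd : ∀ c, ¬ Pendant G c → ∃ p, Pendant G p ∧ Adjd G c p
  not_adjd : ∀ {p q}, Pendant G p → Pendant G q → ¬ Adjd G p q

/-- Two adjacent pendant vertices would form a connected component of their own. -/
theorem InClassD.pendantCovered {n : ℕ} {G : Fin n → Fin n → Prop} (hD : InClassD G)
    (hSC : StronglyConnected G) (hn : 3 ≤ n) : PendantCovered G := by
  refine ⟨fun c hc => ?_, fun {p q} hp hq hpq => ?_⟩
  · obtain ⟨p, hcp, hp⟩ := hD.2 c hc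
    exact ⟨p, hp, hcp⟩
  have hreach : ∀ r, Relation.ReflTransGen G p r → r = p ∨ r = q := by
    intro r hr
    induction hr with
    | refl => exact Or.inl rfl
    | @tail b c _ hbc ih =>
      have hadj : Adjd G b c := ⟨fun h => hD.1.1 b (h ▸ hbc), hbc, hD.1.2 b c hbc⟩
      rcases ih with rfl | rfl
      · exact Or.inr (hp.eq_of_adjd hadj hpq)
      · exact Or.inl (hq.eq_of_adjd hadj hpq.symm)
  have hcard : ({p, q} : Finset (Fin n)).card < (univ : Finset (Fin n)).card := by
    rw [card_univ, Fintype.card_fin]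
    exact (card_le_two).trans_lt (by omega)
  obtain ⟨r, -, hr⟩ := exists_mem_notMem_of_card_lt_card hcard
  rcases hreach r (hSC p r) with rfl | rfl <;> simp at hr

open scoped Classical in
/-- The admissible partners of each vertex in a maximum matching: a pendant neighbour for a
core, and the vertex itself (meaning "no partner chosen") otherwise. -/
noncomputable def choiceSets {n : ℕ} (G : Fin n → Fin n → Prop) (c : Fin n) :
    Finset (Fin n) :=
  if c ∈ cores G then pendantNbrs G c else {c}

noncomputable def choiceSetsWith {n : ℕ} (G : Fin n → Fin n → Prop) (E : Finset (Fin n))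
    (σ : Fin n → Fin n) (c : Fin n) : Finset (Fin n) :=
  if c ∈ E then {σ c} else choiceSets G c

open scoped Classical in
noncomputable def matchingOf {n : ℕ} (G : Fin n → Fin n → Prop) (f : Fin n → Fin n) :
    Finset (Sym2 (Fin n)) :=
  (cores G).image fun c => s(c, f c)

section Matching

variable {n : ℕ} {G : Fin n → Fin n → Prop} {M : Finset (Sym2 (Fin n))} {e : Sym2 (Fin n)}
  {c p x y : Fin n}

theorem IsMatching.eq_of_mem_of_mem (hM : IsMatching G M) {f : Sym2 (Fin n)} (he : e ∈ M)
    (hf : f ∈ M) (hxe : x ∈ e) (hxf : x ∈ f) : e = f := by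
  by_contra hne
  exact hM.2 e he f hf hne x hxe hxf

theorem IsMatching.eq_of_mk_mem (hM : IsMatching G M) (hx : s(c, x) ∈ M) (hy : s(c, y) ∈ M) :
    x = y := by
  have := hM.eq_of_mem_of_mem hx hy (Sym2.mem_mk_left c x) (Sym2.mem_mk_left c y)
  rcases Sym2.eq_iff.mp this with ⟨-, h⟩ | ⟨rfl, rfl⟩
  exacts [h, rfl]

theorem IsMatching.card_le (hM : IsMatching G M) {T : Finset (Fin n)}
    (hT : ∀ e ∈ M, ∃ v ∈ T, v ∈ e) : M.card ≤ T.card :=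
  card_le_card_of_forall_subsingleton (fun e v => v ∈ e) hT
    fun _ _ _ he₁ _ he₂ => hM.eq_of_mem_of_mem he₁.1 he₂.1 he₁.2 he₂.2

theorem mem_pendantNbrs_of_mem_piFinset {f : Fin n → Fin n} (hf : f ∈ piFinset (choiceSets G))
    (hc : c ∈ cores G) : f c ∈ pendantNbrs G c := by
  simpa [choiceSets, hc] using mem_piFinset.mp hf c

theorem eq_of_mem_piFinset_choiceSetsWith {E : Finset (Fin n)} {σ f : Fin n → Fin n}
    (hf : f ∈ piFinset (choiceSetsWith G E σ)) : ∀ c ∈ E, f c = σ c := fun c hc => by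
  simpa [choiceSetsWith, hc] using mem_piFinset.mp hf c

theorem injOn_mk_of_mem_piFinset {f : Fin n → Fin n} (hf : f ∈ piFinset (choiceSets G)) :
    Set.InjOn (fun c => s(c, f c)) (cores G) := by
  intro c hc d hd hcd
  rcases Sym2.eq_iff.mp hcd with ⟨h, -⟩ | ⟨h, -⟩
  · exact h
  · exact absurd (mem_pendantNbrs.mp (mem_pendantNbrs_of_mem_piFinset hf hd)).1
      (h ▸ mem_cores.mp hc)

theorem isMatching_matchingOf {f : Fin n → Fin n} (hf : f ∈ piFinset (choiceSets G)) :
    IsMatching G (matchingOf G f) := by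
  have hfc {c} (hc : c ∈ cores G) := mem_pendantNbrs.mp (mem_pendantNbrs_of_mem_piFinset hf hc)
  refine ⟨?_, ?_⟩
  · simp only [matchingOf, mem_image]
    rintro _ ⟨c, hc, rfl⟩
    exact ⟨c, f c, rfl, (hfc hc).2⟩
  · simp only [matchingOf, mem_image]
    rintro _ ⟨c, hc, rfl⟩ _ ⟨d, hd, rfl⟩ hne v hv hv'
    have hcd : c ≠ d := by rintro rfl; exact hne rfl
    rcases Sym2.mem_iff.mp hv with rfl | rfl <;> rcases Sym2.mem_iff.mp hv' with h | h
    · exact hcd h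
    · exact mem_cores.mp hc (h ▸ (hfc hd).1)
    · exact mem_cores.mp hd (h ▸ (hfc hc).1)
    · exact hcd ((hfc hc).1.eq_of_adjd (hfc hc).2.symm (h ▸ (hfc hd).2.symm))

theorem card_matchingOf {f : Fin n → Fin n} (hf : f ∈ piFinset (choiceSets G)) :
    (matchingOf G f).card = (cores G).card :=
  card_image_of_injOn (injOn_mk_of_mem_piFinset hf)

namespace PendantCovered

variable (hG : PendantCovered G)
include hG

theorem mem_cores_of_mem_pendantNbrs (hp : p ∈ pendantNbrs G c) : c ∈ cores G :=
  mem_cores.mpr fun hc => hG.not_adjd hc (mem_pendantNbrs.mp hp).1 (mem_pendantNbrs.mp hp).2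

theorem center_mem_cores {p : Fin n} (hp : Pendant G p) : center G p ∈ cores G :=
  hG.mem_cores_of_mem_pendantNbrs hp.mem_pendantNbrs_center

theorem exists_mem_cores_mem (he : IsEdge G e) : ∃ c ∈ cores G, c ∈ e := by
  obtain ⟨i, j, rfl, hij⟩ := he
  by_cases hi : Pendant G i
  · exact ⟨j, mem_cores.mpr fun hj => hG.not_adjd hi hj hij, Sym2.mem_mk_right i j⟩
  · exact ⟨i, mem_cores.mpr hi, Sym2.mem_mk_left i j⟩

theorem card_le_of_isMatching (hM : IsMatching G M) : M.card ≤ (cores G).card :=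
  hM.card_le fun e he => hG.exists_mem_cores_mem (hM.1 e he)

theorem piFinset_choiceSets_nonempty : (piFinset (choiceSets G)).Nonempty := by
  refine piFinset_nonempty.mpr fun c => ?_
  by_cases hc : c ∈ cores G
  · obtain ⟨p, hp, hcp⟩ := hG.exists_pendant_adjd c (mem_cores.mp hc)
    exact ⟨p, by simp [choiceSets, hc, hp, hcp]⟩
  · simp [choiceSets, hc]

theorem isMaxMatching_iff : IsMaxMatching G M ↔ IsMatching G M ∧ M.card = (cores G).card := by
  obtain ⟨f, hf⟩ := hG.piFinset_choiceSets_nonempty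
  refine ⟨fun hM => ⟨hM.1, (hG.card_le_of_isMatching hM.1).antisymm ?_⟩,
    fun hM => ⟨hM.1, fun M' hM' => hM.2 ▸ hG.card_le_of_isMatching hM'⟩⟩
  exact card_matchingOf hf ▸ hM.2 _ (isMatching_matchingOf hf)

/-- A maximum matching has exactly as many 2-cycles as there are cores and each of them contains
a core, so none contains two. -/
theorem eq_of_mem_cores_of_isMaxMatching (hM : IsMaxMatching G M) (he : e ∈ M)
    (hx : x ∈ cores G) (hxe : x ∈ e) (hy : y ∈ cores G) (hye : y ∈ e) : x = y := by
  by_contra hxy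
  have hT : ∀ f ∈ M, ∃ v ∈ (cores G).erase x, v ∈ f := by
    intro f hf
    by_cases hfe : f = e
    · exact ⟨y, mem_erase.mpr ⟨Ne.symm hxy, hy⟩, hfe ▸ hye⟩
    · obtain ⟨v, hv, hvf⟩ := hG.exists_mem_cores_mem (hM.1.1 f hf)
      refine ⟨v, mem_erase.mpr ⟨?_, hv⟩, hvf⟩
      rintro rfl
      exact hfe (hM.1.eq_of_mem_of_mem hf he hvf hxe)
  have := hM.1.card_le hT
  rw [card_erase_of_mem hx, ((hG.isMaxMatching_iff).mp hM).2] at this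
  have : 0 < (cores G).card := card_pos.mpr ⟨x, hx⟩
  omega

theorem exists_eq_mk_of_isMaxMatching (hM : IsMaxMatching G M) (he : e ∈ M) :
    ∃ c ∈ cores G, ∃ p ∈ pendantNbrs G c, e = s(c, p) := by
  obtain ⟨c, hc, hce⟩ := hG.exists_mem_cores_mem (hM.1.1 e he)
  obtain ⟨p, rfl⟩ := Sym2.mem_iff_exists.mp hce
  have hcp : Adjd G c p := (hM.1.1 _ he).adjd
  refine ⟨c, hc, p, mem_pendantNbrs.mpr ⟨?_, hcp⟩, rfl⟩
  by_contra hp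
  exact hcp.1 (hG.eq_of_mem_cores_of_isMaxMatching hM he hc hce (mem_cores.mpr hp)
    (Sym2.mem_mk_right c p))

theorem exists_mk_mem_of_isMaxMatching (hM : IsMaxMatching G M) (hc : c ∈ cores G) :
    ∃ p ∈ pendantNbrs G c, s(c, p) ∈ M := by
  by_contra! h
  have hT : ∀ e ∈ M, ∃ v ∈ (cores G).erase c, v ∈ e := by
    intro e he
    obtain ⟨d, hd, p, hp, rfl⟩ := hG.exists_eq_mk_of_isMaxMatching hM he
    refine ⟨d, mem_erase.mpr ⟨?_, hd⟩, Sym2.mem_mk_left d p⟩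
    rintro rfl
    exact h p hp he
  have := hM.1.card_le hT
  rw [card_erase_of_mem hc, ((hG.isMaxMatching_iff).mp hM).2] at this
  have : 0 < (cores G).card := card_pos.mpr ⟨c, hc⟩
  omega

theorem isMaxMatching_iff_exists :
    IsMaxMatching G M ↔ ∃ f ∈ piFinset (choiceSets G), matchingOf G f = M := by
  refine ⟨fun hM => ?_, ?_⟩
  · choose g hg using fun c (hc : c ∈ cores G) => hG.exists_mk_mem_of_isMaxMatching hM hc
    refine ⟨fun c => if hc : c ∈ cores G then g c hc else c, mem_piFinset.mpr fun c => ?_, ?_⟩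
    · by_cases hc : c ∈ cores G <;> simp [choiceSets, hc, (hg c _).1]
    · ext e
      simp only [matchingOf, mem_image]
      constructor
      · rintro ⟨c, hc, rfl⟩
        simpa [hc] using (hg c hc).2
      · intro he
        obtain ⟨c, hc, p, -, rfl⟩ := hG.exists_eq_mk_of_isMaxMatching hM he
        exact ⟨c, hc, by simp [hc, hM.1.eq_of_mk_mem (hg c hc).2 he]⟩
  · rintro ⟨f, hf, rfl⟩
    exact hG.isMaxMatching_iff.mpr ⟨isMatching_matchingOf hf, card_matchingOf hf⟩

theorem mk_mem_matchingOf_iff {f : Fin n → Fin n} (hp : p ∈ pendantNbrs G c) :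
    s(c, p) ∈ matchingOf G f ↔ f c = p := by
  have hc := hG.mem_cores_of_mem_pendantNbrs hp
  refine ⟨fun h => ?_, fun h => mem_image.mpr ⟨c, hc, h ▸ rfl⟩⟩
  obtain ⟨d, hd, hdc⟩ := mem_image.mp h
  rcases Sym2.eq_iff.mp hdc with ⟨rfl, hfd⟩ | ⟨rfl, -⟩
  · exact hfd
  · exact absurd (mem_pendantNbrs.mp hp).1 (mem_cores.mp hd)

theorem injOn_matchingOf : Set.InjOn (matchingOf G) (piFinset (choiceSets G)) := by
  intro f hf g hg hfg
  funext c
  by_cases hc : c ∈ cores G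
  · have hfc := mem_pendantNbrs_of_mem_piFinset hf hc
    exact ((hG.mk_mem_matchingOf_iff hfc).mp (hfg ▸ mem_image_of_mem _ hc)).symm
  · have hf := mem_piFinset.mp hf c
    have hg := mem_piFinset.mp hg c
    simp only [choiceSets, hc, if_false, mem_singleton] at hf hg
    rw [hf, hg]

theorem piFinset_choiceSetsWith_subset {E : Finset (Fin n)} {σ : Fin n → Fin n}
    (hσ : ∀ c ∈ E, σ c ∈ pendantNbrs G c) :
    piFinset (choiceSetsWith G E σ) ⊆ piFinset (choiceSets G) := by
  intro f hf
  refine mem_piFinset.mpr fun c => ?_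
  have hfc := mem_piFinset.mp hf c
  rw [choiceSetsWith] at hfc
  split_ifs at hfc with hc
  · rw [choiceSets, if_pos (hG.mem_cores_of_mem_pendantNbrs (hσ c hc)), mem_singleton.mp hfc]
    exact hσ c hc
  · exact hfc

theorem filter_eq_image_matchingOf {E : Finset (Fin n)} {σ : Fin n → Fin n}
    (hσ : ∀ c ∈ E, σ c ∈ pendantNbrs G c) (𝓜 : Finset (Finset (Sym2 (Fin n))))
    (h𝓜 : ∀ M, M ∈ 𝓜 ↔ IsMaxMatching G M) :
    {M ∈ 𝓜 | ∀ c ∈ E, s(c, σ c) ∈ M}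
      = (piFinset (choiceSetsWith G E σ)).image (matchingOf G) := by
  ext M
  simp only [mem_filter, h𝓜, hG.isMaxMatching_iff_exists, mem_image]
  constructor
  · rintro ⟨⟨f, hf, rfl⟩, hfE⟩
    refine ⟨f, mem_piFinset.mpr fun c => ?_, rfl⟩
    rw [choiceSetsWith]
    split_ifs with hc
    · exact mem_singleton.mpr ((hG.mk_mem_matchingOf_iff (hσ c hc)).mp (hfE c hc))
    · exact mem_piFinset.mp hf c
  · rintro ⟨f, hf, rfl⟩
    have hf' := hG.piFinset_choiceSetsWith_subset hσ hf
    have hfE := eq_of_mem_piFinset_choiceSetsWith hf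
    exact ⟨⟨f, hf', rfl⟩, fun c hc => (hG.mk_mem_matchingOf_iff (hσ c hc)).mpr (hfE c hc)⟩

theorem exists_isMaxMatching_forall_mem {E : Finset (Fin n)} {σ : Fin n → Fin n}
    (hσ : ∀ c ∈ E, σ c ∈ pendantNbrs G c) :
    ∃ M, IsMaxMatching G M ∧ ∀ c ∈ E, s(c, σ c) ∈ M := by
  obtain ⟨f, hf⟩ : (piFinset (choiceSetsWith G E σ)).Nonempty := by
    refine piFinset_nonempty.mpr fun c => ?_
    rw [choiceSetsWith]
    split_ifs
    · exact singleton_nonempty _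
    · exact piFinset_nonempty.mp hG.piFinset_choiceSets_nonempty c
  have hf' := hG.piFinset_choiceSetsWith_subset hσ hf
  refine ⟨matchingOf G f, hG.isMaxMatching_iff_exists.mpr ⟨f, hf', rfl⟩, fun c hc => ?_⟩
  exact (hG.mk_mem_matchingOf_iff (hσ c hc)).mpr (eq_of_mem_piFinset_choiceSetsWith hf c hc)

end PendantCovered
end Matching

section MatchingSum

variable {n : ℕ} {A : Matrix (Fin n) (Fin n) ℝ}

theorem mem_maxMatchings {M : Finset (Sym2 (Fin n))} :
    M ∈ maxMatchings A ↔ IsMaxMatching (DA A) M := by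
  simp [maxMatchings]

noncomputable def pendantWeight (A : Matrix (Fin n) (Fin n) ℝ) (c : Fin n) : ℝ :=
  ∑ p ∈ pendantNbrs (DA A) c, A c p * A p c

theorem PendantCovered.prod_filter_matchingOf (hG : PendantCovered (DA A))
    {E : Finset (Fin n)} {σ f : Fin n → Fin n} (hσ : ∀ c ∈ E, σ c ∈ pendantNbrs (DA A) c)
    {L : List (Sym2 (Fin n))}
    (hL : ∀ c ∈ cores (DA A), ∀ p ∈ pendantNbrs (DA A) c,
      s(c, p) ∈ L ↔ c ∈ E ∧ p = σ c)
    (hf : f ∈ piFinset (choiceSetsWith (DA A) E σ)) :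
    ∏ e ∈ matchingOf (DA A) f with e ∉ L, cycProd A e
      = ∏ c, if c ∈ cores (DA A) \ E then A c (f c) * A (f c) c else 1 := by
  have hf' := hG.piFinset_choiceSetsWith_subset hσ hf
  have hfilter : {e ∈ matchingOf (DA A) f | e ∉ L}
      = (cores (DA A) \ E).image fun c => s(c, f c) := by
    rw [matchingOf, filter_image]
    congr 1
    ext c
    simp only [mem_filter, mem_sdiff]
    refine and_congr_right fun hc => not_congr ?_
    rw [hL c hc _ (mem_pendantNbrs_of_mem_piFinset hf' hc)]
    exact ⟨And.left, fun h => ⟨h, eq_of_mem_piFinset_choiceSetsWith hf c h⟩⟩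
  rw [hfilter, prod_image ((injOn_mk_of_mem_piFinset hf').mono sdiff_subset),
    Fintype.prod_ite_mem]
  rfl

/-- Summing over the free choices of pendant partners factorises the sum into a product. -/
theorem PendantCovered.sum_prod_eq_prod_pendantWeight (hG : PendantCovered (DA A))
    {E : Finset (Fin n)} {σ : Fin n → Fin n} (hσ : ∀ c ∈ E, σ c ∈ pendantNbrs (DA A) c)
    {L : List (Sym2 (Fin n))}
    (hL : ∀ c ∈ cores (DA A), ∀ p ∈ pendantNbrs (DA A) c,
      s(c, p) ∈ L ↔ c ∈ E ∧ p = σ c) :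
    ∑ M ∈ maxMatchings A with ∀ c ∈ E, s(c, σ c) ∈ M,
        ∏ e ∈ M with e ∉ L, cycProd A e
      = ∏ c ∈ cores (DA A) \ E, pendantWeight A c := by
  rw [hG.filter_eq_image_matchingOf hσ _ fun _ => mem_maxMatchings,
    sum_image (hG.injOn_matchingOf.mono (hG.piFinset_choiceSetsWith_subset hσ)),
    sum_congr rfl fun f hf => hG.prod_filter_matchingOf hσ hL hf, ← Fintype.prod_ite_mem,
    ← prod_univ_sum (f := fun c x => if c ∈ cores (DA A) \ E then A c x * A x c else 1)]
  refine prod_congr rfl fun c _ => ?_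
  by_cases hc : c ∈ cores (DA A) \ E
  · obtain ⟨hcC, hcE⟩ := mem_sdiff.mp hc
    simp only [choiceSetsWith, hc, hcE, hcC, if_true, if_false, choiceSets, pendantWeight]
  · have hcard : (choiceSetsWith (DA A) E σ c).card = 1 := by
      by_cases hcE : c ∈ E
      · simp [choiceSetsWith, hcE]
      · have hcC : c ∉ cores (DA A) := fun h => hc (mem_sdiff.mpr ⟨h, hcE⟩)
        simp [choiceSetsWith, hcE, choiceSets, hcC]
    simp [hc, hcard]

end MatchingSum

section AltChain

variable {n : ℕ} {G : Fin n → Fin n → Prop} {M : Finset (Sym2 (Fin n))} {a b c d i j : Fin n}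

theorem isCycleChainBtw_pair (h : Adjd G i j) : IsCycleChainBtw G i j [i, j] :=
  ⟨⟨by simp [h.1], by simp, List.isChain_pair.mpr h⟩, rfl, rfl⟩

theorem isAltChain_pair (h : s(i, j) ∈ M) : IsAltChain M [i, j] := by
  refine ⟨by simp [chainEdges], fun k hk => ?_⟩
  obtain rfl : k = 0 := by simpa [chainEdges] using hk
  simpa [chainEdges] using h

theorem isCycleChainBtw_quad (hab : Adjd G a b) (hbc : Adjd G b c) (hcd : Adjd G c d)
    (hnd : [a, b, c, d].Nodup) : IsCycleChainBtw G a d [a, b, c, d] :=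
  ⟨⟨hnd, by simp, .cons_cons hab (.cons_cons hbc (List.isChain_pair.mpr hcd))⟩, rfl, rfl⟩

theorem isAltChain_quad (hab : s(a, b) ∈ M) (hbc : s(b, c) ∉ M) (hcd : s(c, d) ∈ M) :
    IsAltChain M [a, b, c, d] := by
  refine ⟨by simp [chainEdges, Nat.odd_iff], fun k hk => ?_⟩
  have hk3 : k < 3 := by simpa [chainEdges] using hk
  interval_cases k <;> simp [chainEdges, hab, hbc, hcd]

/-- An interior vertex of a cycle chain has two distinct neighbours, hence is a core; since every
2-cycle of a maximum matching has a pendant end, an alternating chain has at most three 2-cycles. -/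
theorem PendantCovered.isAltChain_cases (hG : PendantCovered G) (hM : IsMaxMatching G M)
    {l : List (Fin n)} (hl : IsCycleChainBtw G i j l) (halt : IsAltChain M l) :
    (l = [i, j] ∧ s(i, j) ∈ M) ∨
      (l = [i, center G i, center G j, j] ∧ Pendant G i ∧ Pendant G j ∧
        Adjd G (center G i) (center G j) ∧ s(i, center G i) ∈ M ∧
          s(center G j, j) ∈ M) := by
  obtain ⟨⟨hnd, hlen, hch⟩, hi, hj⟩ := hl
  have hpend {x y : Fin n} (hxy : s(x, y) ∈ M) (hy : ¬ Pendant G y) : Pendant G x := by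
    obtain ⟨c, hc, p, hp, hcp⟩ := hG.exists_eq_mk_of_isMaxMatching hM hxy
    rcases Sym2.eq_iff.mp hcp with ⟨-, rfl⟩ | ⟨rfl, -⟩
    exacts [absurd (mem_pendantNbrs.mp hp).1 hy, (mem_pendantNbrs.mp hp).1]
  have hedge (k : ℕ) (hk : k < (chainEdges l).length) := halt.2 k hk
  rcases l with _ | ⟨a, _ | ⟨b, _ | ⟨d, _ | ⟨e, rest⟩⟩⟩⟩
  · simp at hlen
  · simp at hlen
  · simp only [List.head?_cons, Option.some.injEq, List.getLast?_cons_cons,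
      List.getLast?_singleton] at hi hj
    subst hi hj
    exact Or.inl ⟨rfl, by simpa [chainEdges] using hedge 0 (by simp [chainEdges])⟩
  · simpa [chainEdges, Nat.odd_iff] using halt.1
  replace hch : List.IsChain (Adjd G) _ := hch
  simp only [List.isChain_cons_cons] at hch
  obtain ⟨hab, hbd, hde, hrest⟩ := hch
  simp only [List.nodup_cons, List.mem_cons, not_or] at hnd
  obtain ⟨⟨-, had, -⟩, ⟨-, hbe, -⟩, ⟨-, hdrest⟩, -⟩ := hnd
  have h₀ : s(a, b) ∈ M := by simpa [chainEdges] using hedge 0 (by simp [chainEdges])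
  have h₂ : s(d, e) ∈ M := by simpa [chainEdges] using hedge 2 (by simp [chainEdges])
  have hb : ¬ Pendant G b := fun hb => had (hb.eq_of_adjd hab.symm hbd)
  have hd : ¬ Pendant G d := fun hd => hbe (hd.eq_of_adjd hbd.symm hde)
  have ha : Pendant G a := hpend h₀ hb
  have he : Pendant G e := hpend (Sym2.eq_swap ▸ h₂) hd
  rcases rest with _ | ⟨x, rest⟩
  · simp only [List.head?_cons, Option.some.injEq, List.getLast?_cons_cons,
      List.getLast?_singleton] at hi hj
    subst hi hj
    have hb' : center G a = b := ha.center_eq hab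
    have hd' : center G e = d := he.center_eq hde.symm
    subst hb' hd'
    refine Or.inr ⟨rfl, ha, he, hbd, h₀, h₂⟩
  · have hdx : d ≠ x := fun h => hdrest (h ▸ List.mem_cons_self)
    exact absurd (he.eq_of_adjd hde.symm (List.isChain_cons_cons.mp hrest).1) hdx

end AltChain

section Mu

variable {n : ℕ} {A : Matrix (Fin n) (Fin n) ℝ} {i j c p q : Fin n}

theorem theChain_spec (h : MaxMatchable A i j) :
    IsCycleChainBtw (DA A) i j (theChain A i j) ∧
      ∃ M ∈ MMset A i j, IsAltChain M (theChain A i j) := by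
  obtain ⟨M, hM, l, hl, halt⟩ := h
  have hex : ∃ l, IsCycleChainBtw (DA A) i j l ∧ ∃ M ∈ MMset A i j, IsAltChain M l :=
    ⟨l, hl, M, ⟨hM, l, hl, halt⟩, halt⟩
  rw [theChain, dif_pos hex]
  exact hex.choose_spec

theorem mu_eq_zero_of_not_maxMatchable (h : ¬ MaxMatchable A i j) : mu A i j = 0 := by
  simp [mu, beta, h]

theorem mu_self (A : Matrix (Fin n) (Fin n) ℝ) (i : Fin n) : mu A i i = 0 :=
  mu_eq_zero_of_not_maxMatchable fun ⟨_, _, _, hl, _⟩ => hl.ne rfl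

theorem mu_eq_of_theChain_eq (h : MaxMatchable A i j) {l : List (Fin n)}
    (hl : theChain A i j = l) :
    mu A i j = (-1) ^ ((l.length - 2) / 2) * pathProd A l *
      ∑ M ∈ (MMset A i j).toFinite.toFinset,
        ∏ e ∈ M with e ∉ chainEdges l, cycProd A e := by
  subst hl
  rw [mu, beta, if_pos h]
  rfl

namespace PendantCovered

variable (hG : PendantCovered (DA A))
include hG

theorem mem_MMset_iff_of_not_pendant (h : ¬ (Pendant (DA A) i ∧ Pendant (DA A) j))
    {M : Finset (Sym2 (Fin n))} :
    M ∈ MMset A i j ↔ IsMaxMatching (DA A) M ∧ s(i, j) ∈ M := by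
  refine ⟨fun ⟨hM, l, hl, halt⟩ => ?_, fun ⟨hM, hij⟩ => ?_⟩
  · rcases hG.isAltChain_cases hM hl halt with ⟨-, hij⟩ | ⟨-, hi, hj, -⟩
    exacts [⟨hM, hij⟩, absurd ⟨hi, hj⟩ h]
  · exact ⟨hM, [i, j], isCycleChainBtw_pair (hM.1.1 _ hij).adjd, isAltChain_pair hij⟩

theorem mem_MMset_iff_of_pendant (hi : Pendant (DA A) i) (hj : Pendant (DA A) j)
    (hadj : Adjd (DA A) (center (DA A) i) (center (DA A) j)) {M : Finset (Sym2 (Fin n))} :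
    M ∈ MMset A i j ↔ IsMaxMatching (DA A) M ∧ s(i, center (DA A) i) ∈ M ∧
      s(center (DA A) j, j) ∈ M := by
  refine ⟨fun ⟨hM, l, hl, halt⟩ => ?_, fun ⟨hM, hi', hj'⟩ => ?_⟩
  · rcases hG.isAltChain_cases hM hl halt with ⟨-, hij⟩ | ⟨-, -, -, -, hi', hj'⟩
    exacts [absurd (hM.1.1 _ hij).adjd (hG.not_adjd hi hj), ⟨hM, hi', hj'⟩]
  have hci := mem_cores.mp (hG.center_mem_cores hi)
  have hcj := mem_cores.mp (hG.center_mem_cores hj)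
  have hcore : s(center (DA A) i, center (DA A) j) ∉ M := fun h =>
    hadj.1 (hG.eq_of_mem_cores_of_isMaxMatching hM h (hG.center_mem_cores hi)
      (Sym2.mem_mk_left _ _) (hG.center_mem_cores hj) (Sym2.mem_mk_right _ _))
  have hnd : [i, center (DA A) i, center (DA A) j, j].Nodup := by
    have hij : i ≠ j := by rintro rfl; exact hadj.1 rfl
    simp only [List.nodup_cons, List.mem_cons, List.not_mem_nil, or_false, not_or]
    exact ⟨⟨hi.adjd_center.1, hi.ne_of_not_pendant hcj, hij⟩,
      ⟨hadj.1, (hj.ne_of_not_pendant hci).symm⟩, (hj.ne_of_not_pendant hcj).symm,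
      not_false, List.nodup_nil⟩
  exact ⟨hM, _, isCycleChainBtw_quad hi.adjd_center hadj hj.adjd_center.symm hnd,
    isAltChain_quad hi' hcore hj'⟩

theorem maxMatchable_cases (h : MaxMatchable A i j) :
    j ∈ pendantNbrs (DA A) i ∨ i ∈ pendantNbrs (DA A) j ∨
      (Pendant (DA A) i ∧ Pendant (DA A) j ∧
        Adjd (DA A) (center (DA A) i) (center (DA A) j)) := by
  obtain ⟨M, hM, l, hl, halt⟩ := h
  rcases hG.isAltChain_cases hM hl halt with ⟨-, hij⟩ | ⟨-, hi, hj, hadj, -⟩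
  · obtain ⟨c, -, p, hp, hcp⟩ := hG.exists_eq_mk_of_isMaxMatching hM hij
    rcases Sym2.eq_iff.mp hcp with ⟨rfl, rfl⟩ | ⟨rfl, rfl⟩
    exacts [Or.inl hp, Or.inr (Or.inl hp)]
  · exact Or.inr (Or.inr ⟨hi, hj, hadj⟩)

theorem theChain_eq_pair (h : MaxMatchable A i j)
    (hij : ¬ (Pendant (DA A) i ∧ Pendant (DA A) j)) : theChain A i j = [i, j] := by
  obtain ⟨hl, M, ⟨hM, -⟩, halt⟩ := theChain_spec h
  rcases hG.isAltChain_cases hM hl halt with ⟨hl, -⟩ | ⟨-, hi, hj, -⟩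
  exacts [hl, absurd ⟨hi, hj⟩ hij]

theorem theChain_eq_quad (h : MaxMatchable A i j) (hi : Pendant (DA A) i)
    (hj : Pendant (DA A) j) :
    theChain A i j = [i, center (DA A) i, center (DA A) j, j] := by
  obtain ⟨hl, M, ⟨hM, -⟩, halt⟩ := theChain_spec h
  rcases hG.isAltChain_cases hM hl halt with ⟨-, hij⟩ | ⟨hl, -⟩
  exacts [absurd (hM.1.1 _ hij).adjd (hG.not_adjd hi hj), hl]

theorem mu_eq_prod_pendantWeight {l : List (Fin n)} {E : Finset (Fin n)} {σ : Fin n → Fin n}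
    (hσ : ∀ c ∈ E, σ c ∈ pendantNbrs (DA A) c)
    (hMM : ∀ M, M ∈ MMset A i j ↔ IsMaxMatching (DA A) M ∧ ∀ c ∈ E, s(c, σ c) ∈ M)
    (hl : MaxMatchable A i j → theChain A i j = l)
    (hL : ∀ c ∈ cores (DA A), ∀ p ∈ pendantNbrs (DA A) c,
      s(c, p) ∈ chainEdges l ↔ c ∈ E ∧ p = σ c) :
    mu A i j = (-1) ^ ((l.length - 2) / 2) * pathProd A l *
      ∏ c ∈ cores (DA A) \ E, pendantWeight A c := by
  obtain ⟨M, hM, hMσ⟩ := hG.exists_isMaxMatching_forall_mem hσ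
  have hmm : MaxMatchable A i j := ⟨M, (hMM M).mpr ⟨hM, hMσ⟩⟩
  rw [mu_eq_of_theChain_eq hmm (hl hmm), ← hG.sum_prod_eq_prod_pendantWeight hσ hL]
  congr 2
  ext M
  simp [hMM, mem_maxMatchings]

theorem mu_of_mem_pendantNbrs (hp : p ∈ pendantNbrs (DA A) c) :
    mu A c p = A c p * ∏ x ∈ cores (DA A) \ {c}, pendantWeight A x := by
  have hc := mem_cores.mp (hG.mem_cores_of_mem_pendantNbrs hp)
  have hnp : ¬ (Pendant (DA A) c ∧ Pendant (DA A) p) := fun h => hc h.1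
  rw [hG.mu_eq_prod_pendantWeight (E := {c}) (σ := fun _ => p) (by simpa using hp)
    (fun M => by simp [hG.mem_MMset_iff_of_not_pendant hnp]) (hG.theChain_eq_pair · hnp)]
  · simp [pathProd]
  · intro x hx q hq
    have hxp := ((mem_pendantNbrs.mp hp).1.ne_of_not_pendant (mem_cores.mp hx)).symm
    simp [chainEdges, hxp]

theorem mu_of_mem_pendantNbrs' (hp : p ∈ pendantNbrs (DA A) c) :
    mu A p c = A p c * ∏ x ∈ cores (DA A) \ {c}, pendantWeight A x := by
  have hc := mem_cores.mp (hG.mem_cores_of_mem_pendantNbrs hp)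
  have hnp : ¬ (Pendant (DA A) p ∧ Pendant (DA A) c) := fun h => hc h.2
  rw [hG.mu_eq_prod_pendantWeight (E := {c}) (σ := fun _ => p) (by simpa using hp)
    (fun M => by simp [hG.mem_MMset_iff_of_not_pendant hnp, Sym2.eq_swap])
    (hG.theChain_eq_pair · hnp)]
  · simp [pathProd]
  · intro x hx q hq
    have hxp := ((mem_pendantNbrs.mp hp).1.ne_of_not_pendant (mem_cores.mp hx)).symm
    simp [chainEdges, hxp]

theorem mu_of_adjd_of_mem_pendantNbrs {d : Fin n} (hp : p ∈ pendantNbrs (DA A) c)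
    (hq : q ∈ pendantNbrs (DA A) d) (hcd : Adjd (DA A) c d) :
    mu A p q = -(A p c * A c d * A d q) *
      ∏ x ∈ cores (DA A) \ {c, d}, pendantWeight A x := by
  have hp' := (mem_pendantNbrs.mp hp).1
  have hq' := (mem_pendantNbrs.mp hq).1
  have hcp := center_eq_of_mem_pendantNbrs hp
  have hdq := center_eq_of_mem_pendantNbrs hq
  have hσ : ∀ x ∈ ({c, d} : Finset (Fin n)),
      (if x = c then p else q) ∈ pendantNbrs (DA A) x := by
    simp only [mem_insert, mem_singleton]
    rintro x (rfl | rfl)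
    exacts [by simpa using hp, by simpa [hcd.1.symm] using hq]
  have hMM (M : Finset (Sym2 (Fin n))) :
      M ∈ MMset A p q ↔ IsMaxMatching (DA A) M ∧ ∀ x ∈ ({c, d} : Finset (Fin n)),
        s(x, if x = c then p else q) ∈ M := by
    simp [hG.mem_MMset_iff_of_pendant hp' hq' (hcp ▸ hdq ▸ hcd), hcp, hdq, hcd.1.symm,
      Sym2.eq_swap]
  rw [hG.mu_eq_prod_pendantWeight hσ hMM fun h => by rw [hG.theChain_eq_quad h hp' hq', hcp, hdq]]
  · simp only [pathProd, List.tail_cons, List.zipWith_cons_cons, List.zipWith_nil_right,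
      List.prod_cons, List.prod_nil, List.length_cons, List.length_nil, Nat.reduceAdd,
      Nat.reduceSub, Nat.reduceDiv, pow_one]
    ring
  · intro x hx r hr
    have hxp := (hp'.ne_of_not_pendant (mem_cores.mp hx)).symm
    have hxq := (hq'.ne_of_not_pendant (mem_cores.mp hx)).symm
    have hr := (mem_pendantNbrs.mp hr).1
    have hrc := hr.ne_of_not_pendant (mem_cores.mp (hG.mem_cores_of_mem_pendantNbrs hp))
    have hrd := hr.ne_of_not_pendant (mem_cores.mp (hG.mem_cores_of_mem_pendantNbrs hq))
    simp only [chainEdges, List.tail_cons, List.zipWith_cons_cons, List.zipWith_nil_right,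
      List.mem_cons, List.not_mem_nil, Sym2.eq_iff, hxp, hxq, hrc, hrd, mem_insert, mem_singleton]
    by_cases hxc : x = c
    · simp [hxc, hcd.1]
    · simp [hxc]

end PendantCovered
end Mu

theorem Finset.prod_sdiff_singleton_eq_mul {α M : Type*} [DecidableEq α] [CommMonoid M]
    {s : Finset α} {c d : α} (hc : c ∈ s) (hcd : c ≠ d) (f : α → M) :
    ∏ x ∈ s \ {d}, f x = f c * ∏ x ∈ s \ {c, d}, f x := by
  rw [← mul_prod_erase _ _ (mem_sdiff.mpr ⟨hc, by simpa using hcd⟩)]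
  congr 2
  ext x
  simp only [mem_erase, mem_sdiff, mem_insert, mem_singleton]
  tauto

section Identity

variable {n : ℕ} {A : Matrix (Fin n) (Fin n) ℝ} {i j c p : Fin n}

theorem IsSSD.entry_eq_zero_of_not_adjd (hA : IsSSD (DA A)) (h : ¬ Adjd (DA A) i j) :
    A i j = 0 := by
  by_contra hij
  by_cases heq : i = j
  · exact hA.1 i (heq ▸ hij)
  · exact h ⟨heq, hij, hA.2 i j hij⟩

theorem IsSSD.diag_eq_zero (hA : IsSSD (DA A)) (i : Fin n) : A i i = 0 :=
  hA.entry_eq_zero_of_not_adjd fun h => h.1 rfl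

theorem IsSSD.entry_eq_zero_of_ne_center (hA : IsSSD (DA A)) (hp : Pendant (DA A) p)
    (hc : c ≠ center (DA A) p) : A p c = 0 :=
  hA.entry_eq_zero_of_not_adjd fun h => hc (hp.center_eq h).symm

theorem IsSSD.entry_eq_zero_of_ne_center' (hA : IsSSD (DA A)) (hp : Pendant (DA A) p)
    (hc : c ≠ center (DA A) p) : A c p = 0 :=
  hA.entry_eq_zero_of_not_adjd fun h => hc (hp.center_eq h.symm).symm

theorem IsSSD.sum_mul_of_pendant (hA : IsSSD (DA A)) (hp : Pendant (DA A) p) (f : Fin n → ℝ) :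
    ∑ k, A p k * f k = A p (center (DA A) p) * f (center (DA A) p) :=
  sum_eq_single _ (fun _ _ hk => by rw [hA.entry_eq_zero_of_ne_center hp hk, zero_mul])
    (by simp)

theorem IsSSD.sum_mul_of_pendant' (hA : IsSSD (DA A)) (hp : Pendant (DA A) p) (f : Fin n → ℝ) :
    ∑ k, f k * A k p = f (center (DA A) p) * A (center (DA A) p) p :=
  sum_eq_single _ (fun _ _ hk => by rw [hA.entry_eq_zero_of_ne_center' hp hk, mul_zero])
    (by simp)

theorem sum_eq_sum_cores_add_sum_pendantNbrs {G : Fin n → Fin n → Prop} {R : Type*}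
    [AddCommMonoid R] {g : Fin n → R} (hg : ∀ k, Pendant G k → ¬ Adjd G c k → g k = 0) :
    ∑ k, g k = ∑ k ∈ cores G, g k + ∑ k ∈ pendantNbrs G c, g k := by
  rw [← sum_union (disjoint_left.mpr fun k hk hk' =>
    mem_cores.mp hk (mem_pendantNbrs.mp hk').1)]
  refine (sum_subset (subset_univ _) fun k _ hk => hg k ?_ ?_).symm <;>
    simp_all [mem_union, mem_cores, mem_pendantNbrs]

theorem IsSSD.sum_mul_eq_cores_add_pendantNbrs (hA : IsSSD (DA A)) (c : Fin n)
    (f : Fin n → ℝ) :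
    ∑ k, A c k * f k
      = ∑ k ∈ cores (DA A), A c k * f k + ∑ k ∈ pendantNbrs (DA A) c, A c k * f k :=
  sum_eq_sum_cores_add_sum_pendantNbrs fun _ _ hk => by
    rw [hA.entry_eq_zero_of_not_adjd hk, zero_mul]

theorem IsSSD.sum_mul_eq_cores_add_pendantNbrs' (hA : IsSSD (DA A)) (c : Fin n)
    (f : Fin n → ℝ) :
    ∑ k, f k * A k c
      = ∑ k ∈ cores (DA A), f k * A k c + ∑ k ∈ pendantNbrs (DA A) c, f k * A k c :=
  sum_eq_sum_cores_add_sum_pendantNbrs fun _ _ hk => by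
    rw [hA.entry_eq_zero_of_not_adjd fun h => hk h.symm, mul_zero]

end Identity

namespace PendantCovered

variable {n : ℕ} {A : Matrix (Fin n) (Fin n) ℝ} {i j : Fin n}

theorem mu_of_not_pendant_of_not_pendant (hG : PendantCovered (DA A))
    (hi : ¬ Pendant (DA A) i) (hj : ¬ Pendant (DA A) j) : mu A i j = 0 := by
  refine mu_eq_zero_of_not_maxMatchable fun h => ?_
  rcases hG.maxMatchable_cases h with h | h | h
  exacts [hj (mem_pendantNbrs.mp h).1, hi (mem_pendantNbrs.mp h).1, hi h.1]

theorem mu_of_not_pendant_of_pendant (hA : IsSSD (DA A)) (hG : PendantCovered (DA A))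
    (hi : ¬ Pendant (DA A) i) (hj : Pendant (DA A) j) :
    mu A i j = A i j * ∏ x ∈ cores (DA A) \ {i}, pendantWeight A x := by
  by_cases hij : Adjd (DA A) i j
  · exact hG.mu_of_mem_pendantNbrs (mem_pendantNbrs.mpr ⟨hj, hij⟩)
  rw [hA.entry_eq_zero_of_not_adjd hij, zero_mul]
  refine mu_eq_zero_of_not_maxMatchable fun hm => ?_
  rcases hG.maxMatchable_cases hm with h | h | h
  exacts [hij (mem_pendantNbrs.mp h).2, hi (mem_pendantNbrs.mp h).1, hi h.1]

theorem mu_of_pendant_of_not_pendant (hA : IsSSD (DA A)) (hG : PendantCovered (DA A))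
    (hi : Pendant (DA A) i) (hj : ¬ Pendant (DA A) j) :
    mu A i j = A i j * ∏ x ∈ cores (DA A) \ {j}, pendantWeight A x := by
  by_cases hij : Adjd (DA A) j i
  · exact hG.mu_of_mem_pendantNbrs' (mem_pendantNbrs.mpr ⟨hi, hij⟩)
  rw [hA.entry_eq_zero_of_not_adjd fun h => hij h.symm, zero_mul]
  refine mu_eq_zero_of_not_maxMatchable fun hm => ?_
  rcases hG.maxMatchable_cases hm with h | h | h
  exacts [hj (mem_pendantNbrs.mp h).1, hij (mem_pendantNbrs.mp h).2, hj h.2.1]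

theorem mu_of_pendant_of_pendant (hA : IsSSD (DA A)) (hG : PendantCovered (DA A))
    (hi : Pendant (DA A) i) (hj : Pendant (DA A) j) :
    mu A i j = -(A i (center (DA A) i) * A (center (DA A) i) (center (DA A) j) *
      A (center (DA A) j) j) *
      ∏ x ∈ cores (DA A) \ {center (DA A) i, center (DA A) j}, pendantWeight A x := by
  by_cases hadj : Adjd (DA A) (center (DA A) i) (center (DA A) j)
  · exact hG.mu_of_adjd_of_mem_pendantNbrs hi.mem_pendantNbrs_center
      hj.mem_pendantNbrs_center hadj
  rw [hA.entry_eq_zero_of_not_adjd hadj, mul_zero, zero_mul, neg_zero, zero_mul]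
  refine mu_eq_zero_of_not_maxMatchable fun hm => ?_
  rcases hG.maxMatchable_cases hm with h | h | h
  exacts [hG.not_adjd hi hj (mem_pendantNbrs.mp h).2, hG.not_adjd hj hi (mem_pendantNbrs.mp h).2,
    hadj h.2.2]

theorem sum_mul_mu_of_pendant_of_pendant (hA : IsSSD (DA A)) (hG : PendantCovered (DA A))
    (hi : Pendant (DA A) i) (hj : Pendant (DA A) j) :
    ∑ k, A i k * mu A k j = ∑ l, mu A i l * A l j := by
  rw [hA.sum_mul_of_pendant hi, hA.sum_mul_of_pendant' hj,
    hG.mu_of_not_pendant_of_pendant hA (mem_cores.mp (hG.center_mem_cores hi)) hj,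
    hG.mu_of_pendant_of_not_pendant hA hi (mem_cores.mp (hG.center_mem_cores hj))]
  by_cases h : center (DA A) i = center (DA A) j
  · rw [h]
    ring
  · rw [hA.entry_eq_zero_of_ne_center' hj h, hA.entry_eq_zero_of_ne_center hi (Ne.symm h)]
    ring

theorem sum_mul_mu_of_not_pendant_of_not_pendant (hA : IsSSD (DA A))
    (hG : PendantCovered (DA A)) (hi : ¬ Pendant (DA A) i) (hj : ¬ Pendant (DA A) j) :
    ∑ k, A i k * mu A k j = ∑ l, mu A i l * A l j := by
  have hcores : ∑ k ∈ cores (DA A), A i k * mu A k j = 0 := sum_eq_zero fun k hk => by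
    rw [hG.mu_of_not_pendant_of_not_pendant (mem_cores.mp hk) hj, mul_zero]
  have hcores' : ∑ l ∈ cores (DA A), mu A i l * A l j = 0 := sum_eq_zero fun l hl => by
    rw [hG.mu_of_not_pendant_of_not_pendant hi (mem_cores.mp hl), zero_mul]
  have hpend : ∑ k ∈ pendantNbrs (DA A) i, A i k * mu A k j
      = (∑ k ∈ pendantNbrs (DA A) i, A i k * A k j) *
        ∏ x ∈ cores (DA A) \ {j}, pendantWeight A x := by
    rw [sum_mul]
    refine sum_congr rfl fun k hk => ?_
    rw [hG.mu_of_pendant_of_not_pendant hA (mem_pendantNbrs.mp hk).1 hj, mul_assoc]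
  have hpend' : ∑ l ∈ pendantNbrs (DA A) j, mu A i l * A l j
      = (∑ l ∈ pendantNbrs (DA A) j, A i l * A l j) *
        ∏ x ∈ cores (DA A) \ {i}, pendantWeight A x := by
    rw [sum_mul]
    refine sum_congr rfl fun l hl => ?_
    rw [hG.mu_of_not_pendant_of_pendant hA hi (mem_pendantNbrs.mp hl).1]
    ring
  rw [hA.sum_mul_eq_cores_add_pendantNbrs i, hA.sum_mul_eq_cores_add_pendantNbrs' j, hcores,
    hcores', zero_add, zero_add, hpend, hpend']
  by_cases hij : i = j
  · rw [hij]
  rw [sum_eq_zero fun k hk => by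
    rw [hA.entry_eq_zero_of_ne_center (mem_pendantNbrs.mp hk).1
      (by rwa [center_eq_of_mem_pendantNbrs hk, ne_comm]), mul_zero],
    sum_eq_zero fun l hl => by
    rw [hA.entry_eq_zero_of_ne_center' (mem_pendantNbrs.mp hl).1
      (by rwa [center_eq_of_mem_pendantNbrs hl]), zero_mul], zero_mul, zero_mul]

theorem sum_mul_mu_of_not_pendant_of_pendant (hA : IsSSD (DA A))
    (hG : PendantCovered (DA A)) (hi : ¬ Pendant (DA A) i) (hj : Pendant (DA A) j) :
    ∑ k, A i k * mu A k j = ∑ l, mu A i l * A l j := by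
  have hc := hG.center_mem_cores hj
  set c := center (DA A) j
  have hcores : ∑ k ∈ cores (DA A), A i k * mu A k j
      = A i c * A c j * ∏ x ∈ cores (DA A) \ {c}, pendantWeight A x := by
    have hzero : ∀ k ∈ cores (DA A), k ≠ c → A i k * mu A k j = 0 := fun k hk hkc => by
      rw [hG.mu_of_not_pendant_of_pendant hA (mem_cores.mp hk) hj,
        hA.entry_eq_zero_of_ne_center' hj hkc, zero_mul, mul_zero]
    rw [sum_eq_single_of_mem c hc hzero, hG.mu_of_not_pendant_of_pendant hA (mem_cores.mp hc) hj,
      mul_assoc]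
  have hpend : ∑ k ∈ pendantNbrs (DA A) i, A i k * mu A k j
      = -(pendantWeight A i * A i c * A c j *
        ∏ x ∈ cores (DA A) \ {i, c}, pendantWeight A x) := by
    rw [pendantWeight, sum_mul, sum_mul, sum_mul, ← sum_neg_distrib]
    refine sum_congr rfl fun k hk => ?_
    rw [hG.mu_of_pendant_of_pendant hA (mem_pendantNbrs.mp hk).1 hj,
      center_eq_of_mem_pendantNbrs hk]
    ring
  rw [hA.sum_mul_of_pendant' hj, hG.mu_of_not_pendant_of_not_pendant hi (mem_cores.mp hc),
    zero_mul, hA.sum_mul_eq_cores_add_pendantNbrs i, hcores, hpend]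
  by_cases hic : i = c
  · rw [hic, hA.diag_eq_zero]
    ring
  · rw [prod_sdiff_singleton_eq_mul (mem_cores.mpr hi) hic]
    ring

theorem sum_mul_mu_of_pendant_of_not_pendant (hA : IsSSD (DA A))
    (hG : PendantCovered (DA A)) (hi : Pendant (DA A) i) (hj : ¬ Pendant (DA A) j) :
    ∑ k, A i k * mu A k j = ∑ l, mu A i l * A l j := by
  have hc := hG.center_mem_cores hi
  set c := center (DA A) i
  have hcores : ∑ l ∈ cores (DA A), mu A i l * A l j
      = A i c * A c j * ∏ x ∈ cores (DA A) \ {c}, pendantWeight A x := by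
    have hzero : ∀ l ∈ cores (DA A), l ≠ c → mu A i l * A l j = 0 := fun l hl hlc => by
      rw [hG.mu_of_pendant_of_not_pendant hA hi (mem_cores.mp hl),
        hA.entry_eq_zero_of_ne_center hi hlc, zero_mul, zero_mul]
    rw [sum_eq_single_of_mem c hc hzero, hG.mu_of_pendant_of_not_pendant hA hi (mem_cores.mp hc)]
    ring
  have hpend : ∑ l ∈ pendantNbrs (DA A) j, mu A i l * A l j
      = -(A i c * A c j * pendantWeight A j *
        ∏ x ∈ cores (DA A) \ {j, c}, pendantWeight A x) := by
    rw [pendantWeight, mul_sum, sum_mul, ← sum_neg_distrib, pair_comm]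
    refine sum_congr rfl fun l hl => ?_
    rw [hG.mu_of_pendant_of_pendant hA hi (mem_pendantNbrs.mp hl).1,
      center_eq_of_mem_pendantNbrs hl]
    ring
  rw [hA.sum_mul_of_pendant hi, hG.mu_of_not_pendant_of_not_pendant (mem_cores.mp hc) hj,
    mul_zero, hA.sum_mul_eq_cores_add_pendantNbrs' j, hcores, hpend]
  by_cases hcj : c = j
  · rw [hcj, hA.diag_eq_zero]
    ring
  · rw [prod_sdiff_singleton_eq_mul (mem_cores.mpr hj) (Ne.symm hcj)]
    ring

theorem sum_mul_mu_eq (hA : IsSSD (DA A)) (hG : PendantCovered (DA A)) (i j : Fin n) :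
    ∑ k, A i k * mu A k j = ∑ l, mu A i l * A l j := by
  by_cases hi : Pendant (DA A) i <;> by_cases hj : Pendant (DA A) j
  · exact hG.sum_mul_mu_of_pendant_of_pendant hA hi hj
  · exact hG.sum_mul_mu_of_pendant_of_not_pendant hA hi hj
  · exact hG.sum_mul_mu_of_not_pendant_of_pendant hA hi hj
  · exact hG.sum_mul_mu_of_not_pendant_of_not_pendant hA hi hj

end PendantCovered

section FinTwo

variable {A : Matrix (Fin 2) (Fin 2) ℝ} {i j : Fin 2}

theorem mk_eq_of_ne_fin_two (hij : i ≠ j) : s(i, j) = s(0, 1) := by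
  fin_cases i <;> fin_cases j <;> simp_all [Sym2.eq_swap]

theorem IsCycleChainBtw.eq_pair_fin_two {G : Fin 2 → Fin 2 → Prop} {l : List (Fin 2)}
    (hl : IsCycleChainBtw G i j l) : l = [i, j] := by
  obtain ⟨⟨hnd, hlen, -⟩, hi, hj⟩ := hl
  have hlen2 : l.length = 2 := le_antisymm (by simpa using hnd.length_le_card) hlen
  obtain ⟨a, b, rfl⟩ := List.length_eq_two.mp hlen2
  simp only [List.head?_cons, Option.some.injEq, List.getLast?_cons_cons,
    List.getLast?_singleton] at hi hj
  rw [hi, hj]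

theorem InClassD.isMaxMatching_fin_two_iff (hD : InClassD (DA A)) {M : Finset (Sym2 (Fin 2))} :
    IsMaxMatching (DA A) M ↔ M = {s(0, 1)} := by
  have hsub {M : Finset (Sym2 (Fin 2))} (hM : IsMatching (DA A) M) : M ⊆ {s(0, 1)} := by
    intro e he
    obtain ⟨i, j, rfl, hij⟩ := hM.1 e he
    simp [mk_eq_of_ne_fin_two hij.1]
  have hmatch : IsMatching (DA A) {s(0, 1)} := by
    obtain ⟨j, hj⟩ := hD.exists_adjd 0
    fin_cases j
    · exact absurd rfl hj.1
    · exact ⟨by simpa using ⟨0, 1, rfl, hj⟩, by simp⟩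
  refine ⟨fun hM => eq_of_subset_of_card_le (hsub hM.1) (by simpa using hM.2 _ hmatch), ?_⟩
  rintro rfl
  exact ⟨hmatch, fun M' hM' => by simpa using card_le_card (hsub hM')⟩

theorem InClassD.mu_fin_two (hD : InClassD (DA A)) (hij : i ≠ j) : mu A i j = A i j := by
  have hM := hD.isMaxMatching_fin_two_iff.mpr rfl
  have hmem : s(i, j) ∈ ({s(0, 1)} : Finset (Sym2 (Fin 2))) := by simp [mk_eq_of_ne_fin_two hij]
  have hMM : (MMset A i j).toFinite.toFinset = {{s(0, 1)}} := by
    ext M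
    simp only [Set.Finite.mem_toFinset, mem_singleton]
    refine ⟨fun hM' => hD.isMaxMatching_fin_two_iff.mp hM'.1, ?_⟩
    rintro rfl
    exact ⟨hM, [i, j], isCycleChainBtw_pair (hM.1.1 _ hmem).adjd, isAltChain_pair hmem⟩
  have hmm : MaxMatchable A i j :=
    ⟨_, (Set.Finite.mem_toFinset _).mp (hMM ▸ mem_singleton_self _)⟩
  rw [mu_eq_of_theChain_eq hmm (theChain_spec hmm).1.eq_pair_fin_two, hMM]
  simp [pathProd, chainEdges, mk_eq_of_ne_fin_two hij, filter_singleton]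

theorem InClassD.sum_mul_mu_eq_fin_two (hD : InClassD (DA A)) (i j : Fin 2) :
    ∑ k, A i k * mu A k j = ∑ l, mu A i l * A l j := by
  fin_cases i <;> fin_cases j <;>
    simp [Fin.sum_univ_two, mu_self, hD.mu_fin_two, hD.1.diag_eq_zero, mul_comm]

end FinTwo

theorem AB_eq_BA_general {n : ℕ} (A : Matrix (Fin n) (Fin n) ℝ)
    (hD : InClassD (DA A)) (hSC : StronglyConnected (DA A))
    (B : Matrix (Fin n) (Fin n) ℝ) (hB : ∀ i j, B i j = mu A i j / Delta A) :
    A * B = B * A ∧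
      ∀ i j, (∑ k, A i k * mu A k j) = ∑ l, mu A i l * A l j := by
  have key : ∀ i j, ∑ k, A i k * mu A k j = ∑ l, mu A i l * A l j := by
    rcases le_or_gt 3 n with hn | hn
    · exact (hD.pendantCovered hSC hn).sum_mul_mu_eq hD.1
    interval_cases n
    · exact fun i => i.elim0
    · obtain ⟨j, hj⟩ := hD.exists_adjd 0
      exact absurd (Subsingleton.elim 0 j) hj.1
    · exact hD.sum_mul_mu_eq_fin_two
  refine ⟨?_, key⟩
  have hB' : B = (Delta A)⁻¹ • Matrix.of (mu A) := by
    ext i j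
    simp [hB, div_eq_inv_mul]
  rw [hB', Matrix.mul_smul, Matrix.smul_mul]
  congr 1
  ext i j
  simpa [Matrix.mul_apply] using key i j

/-- Lemma 2.6: with `B = (μ_{ij}/Δ_A)`, one has `AB = BA`; equivalently
`Σ_k a_{ik} μ_{kj} = Σ_l μ_{il} a_{lj}` for all `i, j`. -/
theorem AB_eq_BA {n : ℕ} (A : Matrix (Fin n) (Fin n) ℝ)
    (hD : InClassD (DA A)) (hSC : StronglyConnected (DA A)) (hΔ : Delta A ≠ 0)
    (B : Matrix (Fin n) (Fin n) ℝ) (hB : ∀ i j, B i j = mu A i j / Delta A) :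
    A * B = B * A ∧
      ∀ i j, (∑ k, A i k * mu A k j) = ∑ l, mu A i l * A l j :=
  AB_eq_BA_general A hD hSC B hB
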